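/- arXiv:2011.01325 — 3 statements merged into one kernel-verified Lean document; each statement's English description precedes it below -/
import Mathlib

section
/- Under Assumption S*, let (x,α) ↦ w_α(x) be a Borel measurable function from 𝕏×[0,+∞) to [0,+∞] such that for each x ∈ 𝕏 the function α ↦ w_α(x) is nondecreasing and lower semi-continuous. Then the function (x,a,α) ↦ η^α_{w_α}(x,a) is nonnegative and Borel measurable on Gr(A)×[0,+∞); for each x ∈ 𝕏 and α ≥ 0 the function a ↦ η^α_{w_α}(x,a) is inf-compact on A(x); for each (x,a) ∈ Gr(A) the function α ↦ η^α_{w_α}(x,a) is nondecreasing; and for each x ∈ 𝕏 the function (α,a) ↦ η^α_{w_α}(x,a) is 𝕂-inf-compact on [0,+∞)×A(x). -/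
open MeasureTheory Set Filter Topology
open scoped NNReal ENNReal

/-!
Measurability: `η` is a measurable function integrated against a measurable kernel on the graph.

Semicontinuity: `c(x,·)` is lower semicontinuous on `A(x)` because its sublevel sets are
compact, and `a ↦ ∫ w dq(x,a)` is lower semicontinuous as the supremum of the integrals of the
truncations `min w n`, which are continuous by setwise continuity of `q`. Jointly in `(α,a)`,
`w_α` is monotone and lower semicontinuous in `α`, hence left-continuous, so by monotone
convergence `α ∫ w_α dq(x,a)` is approximated from below by `β ∫ w_β dq(x,a)` with `β < α`;
this is lower semicontinuous in `a` and bounded by the value at every `α' > β`.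

Inf-compactness: the sublevel sets of `η` are relatively closed subsets of the compact sets
`K × {a ∈ A(x) | c(x,a) ≤ r}`.
-/

/-- The optimality-operator integrand
`η^α_w(x,a) := c(x,a) + α ∫ w(z) q(dz|x,a)` of an MDP. -/
noncomputable def eta {X A : Type*} [MeasurableSpace X] (c : X → A → ℝ≥0∞)
    (q : X → A → Measure X) (w : X → ℝ≥0∞) (α : ℝ≥0) (x : X) (a : A) : ℝ≥0∞ :=
  c x a + (α : ℝ≥0∞) * ∫⁻ z, w z ∂(q x a)

section Semicontinuity

variable {α : Type*} [TopologicalSpace α]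

theorem LowerSemicontinuousAt.tendsto_of_eventually_le {β ι : Type*} [LinearOrder β]
    [TopologicalSpace β] [OrderTopology β] {f : α → β} {a : α} (hf : LowerSemicontinuousAt f a)
    {l : Filter ι} {u : ι → α} (hu : Tendsto u l (𝓝 a)) (hle : ∀ᶠ i in l, f (u i) ≤ f a) :
    Tendsto (f ∘ u) l (𝓝 (f a)) :=
  tendsto_order.2
    ⟨fun _ hy => hu.eventually (hf _ hy), fun _ hy => hle.mono fun _ hi => hi.trans_lt hy⟩

theorem LowerSemicontinuousOn.isCompact_sep_le_of_le {γ : Type*} [LinearOrder γ] {f g : α → γ}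
    {s : Set α} (hf : LowerSemicontinuousOn f s) (hgf : ∀ a ∈ s, g a ≤ f a) {r : γ}
    (hg : IsCompact {a ∈ s | g a ≤ r}) : IsCompact {a ∈ s | f a ≤ r} := by
  convert (hf.mono (sep_subset _ _)).isCompact_inter_preimage_Iic hg r using 1
  ext a
  exact ⟨fun ⟨ha, hfa⟩ => ⟨⟨ha, (hgf a ha).trans hfa⟩, hfa⟩, fun ⟨⟨ha, _⟩, hfa⟩ => ⟨ha, hfa⟩⟩

theorem lowerSemicontinuousOn_of_isCompact_sep_le [T2Space α] {f : α → ℝ≥0∞} {s : Set α}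
    (hf : ∀ r : ℝ, IsCompact {a ∈ s | f a ≤ ENNReal.ofReal r}) : LowerSemicontinuousOn f s := by
  rw [lowerSemicontinuousOn_iff_preimage_Iic]
  intro b
  rcases eq_or_ne b ⊤ with rfl | hb
  · exact ⟨univ, isClosed_univ, by simp⟩
  · refine ⟨_, (hf b.toReal).isClosed, ?_⟩
    rw [ENNReal.ofReal_toReal hb]
    ext a
    exact ⟨fun ⟨ha, hfa⟩ => ⟨ha, ha, hfa⟩, fun ⟨ha, _, hfa⟩ => ⟨ha, hfa⟩⟩

end Semicontinuity

section Integrals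

variable {X A : Type*} [MeasurableSpace X] [TopologicalSpace A]

theorem continuousOn_lintegral_of_le {μ : A → Measure X} {s : Set A}
    (hfin : ∀ a ∈ s, IsFiniteMeasure (μ a))
    (hcont : ∀ f : X → ℝ, Measurable f → (∃ C : ℝ, ∀ z, |f z| ≤ C) →
      ContinuousOn (fun a => ∫ z, f z ∂μ a) s)
    {g : X → ℝ≥0∞} (hg : Measurable g) {C : ℝ≥0} (hC : ∀ z, g z ≤ C) :
    ContinuousOn (fun a => ∫⁻ z, g z ∂μ a) s := by
  have hbdd : ∀ z, |(g z).toReal| ≤ C := fun z => by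
    rw [abs_of_nonneg ENNReal.toReal_nonneg]
    exact ENNReal.toReal_le_coe_of_le_coe (hC z)
  refine (ENNReal.continuous_ofReal.comp_continuousOn
    (hcont _ hg.ennreal_toReal ⟨C, hbdd⟩)).congr fun a ha => ?_
  have := hfin a ha
  have hfinite : ∫⁻ z, g z ∂μ a ≠ ⊤ :=
    ((lintegral_mono hC).trans_lt (by
      simpa using ENNReal.mul_lt_top ENNReal.coe_lt_top (measure_lt_top (μ a) univ))).ne
  simp only [Function.comp_apply]
  rw [integral_toReal hg.aemeasurable
    (ae_of_all _ fun z => (hC z).trans_lt ENNReal.coe_lt_top), ENNReal.ofReal_toReal hfinite]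

theorem lowerSemicontinuousOn_lintegral {μ : A → Measure X} {s : Set A}
    (hfin : ∀ a ∈ s, IsFiniteMeasure (μ a))
    (hcont : ∀ f : X → ℝ, Measurable f → (∃ C : ℝ, ∀ z, |f z| ≤ C) →
      ContinuousOn (fun a => ∫ z, f z ∂μ a) s)
    {g : X → ℝ≥0∞} (hg : Measurable g) :
    LowerSemicontinuousOn (fun a => ∫⁻ z, g z ∂μ a) s := by
  have htrunc : ∀ a, ∫⁻ z, g z ∂μ a = ⨆ n : ℕ, ∫⁻ z, min (g z) n ∂μ a := fun a => by
    rw [← lintegral_iSup (fun n => hg.min measurable_const)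
      fun i j hij z => min_le_min_left _ (Nat.cast_le.2 hij)]
    congr 1
    ext z
    rw [← inf_iSup_eq, ENNReal.iSup_natCast, inf_top_eq]
  simp_rw [htrunc]
  refine lowerSemicontinuousOn_iSup fun n => ContinuousOn.lowerSemicontinuousOn <|
    continuousOn_lintegral_of_le hfin hcont (hg.min measurable_const) (C := n) fun z => ?_
  simp

end Integrals

section MonotoneFamily

variable {X : Type*} [MeasurableSpace X] {w : ℝ≥0 → X → ℝ≥0∞}

/-- Being monotone and lower semicontinuous, `w` is left-continuous in the parameter, so this
follows from monotone convergence along a sequence increasing to `α`. -/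
theorem exists_lt_mul_lintegral_of_lt (hw_meas : ∀ β, Measurable (w β))
    (hw_mono : ∀ z, Monotone (w · z)) (hw_lsc : ∀ z, LowerSemicontinuous (w · z))
    (μ : Measure X) {α : ℝ≥0} {y : ℝ≥0∞} (hy : y < α * ∫⁻ z, w α z ∂μ) :
    ∃ β < α, y < β * ∫⁻ z, w β z ∂μ := by
  have hα : α ≠ 0 := by
    rintro rfl
    simp at hy
  obtain ⟨u, hu_mono, hu_mem, hu⟩ := exists_seq_strictMono_tendsto' (pos_iff_ne_zero.2 hα)
  have hw_tendsto : ∀ z, Tendsto (fun k => w (u k) z) atTop (𝓝 (w α z)) := fun z =>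
    LowerSemicontinuousAt.tendsto_of_eventually_le (hw_lsc z α) hu
      (Eventually.of_forall fun k => hw_mono z (hu_mem k).2.le)
  have hint : Tendsto (fun k => ∫⁻ z, w (u k) z ∂μ) atTop (𝓝 (∫⁻ z, w α z ∂μ)) :=
    lintegral_tendsto_of_tendsto_of_monotone (fun k => (hw_meas (u k)).aemeasurable)
      (ae_of_all _ fun z _ _ hij => hw_mono z (hu_mono.monotone hij)) (ae_of_all _ hw_tendsto)
  have hmul := ENNReal.Tendsto.mul (ENNReal.tendsto_coe.2 hu) (Or.inl (ENNReal.coe_ne_zero.2 hα))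
    hint (Or.inr ENNReal.coe_ne_top)
  obtain ⟨k, hk⟩ := (hmul.eventually (lt_mem_nhds hy)).exists
  exact ⟨u k, (hu_mem k).2, hk⟩

theorem lowerSemicontinuousOn_mul_lintegral {A : Type*} [TopologicalSpace A]
    (hw_meas : ∀ β, Measurable (w β)) (hw_mono : ∀ z, Monotone (w · z))
    (hw_lsc : ∀ z, LowerSemicontinuous (w · z)) {μ : A → Measure X} {s : Set A}
    (hμ : ∀ β, LowerSemicontinuousOn (fun a => ∫⁻ z, w β z ∂μ a) s) :
    LowerSemicontinuousOn (fun p : ℝ≥0 × A => (p.1 : ℝ≥0∞) * ∫⁻ z, w p.1 z ∂μ p.2)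
      (univ ×ˢ s) := by
  rintro ⟨α, a⟩ ⟨-, ha⟩ y hy
  obtain ⟨β, hβα, hyβ⟩ := exists_lt_mul_lintegral_of_lt hw_meas hw_mono hw_lsc (μ a) hy
  have hnear : ∀ᶠ a' in 𝓝[s] a, y < β * ∫⁻ z, w β z ∂μ a' :=
    (ENNReal.continuous_const_mul ENNReal.coe_ne_top).comp_lowerSemicontinuousOn (hμ β)
      (fun _ _ h => mul_le_mul_right h _) a ha y hyβ
  rw [nhdsWithin_prod_eq, nhdsWithin_univ]
  filter_upwards [(lt_mem_nhds hβα).prod_mk hnear] with ⟨α', a'⟩ ⟨hβα', hya'⟩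
  exact hya'.trans_le (mul_le_mul' (ENNReal.coe_le_coe.2 hβα'.le)
    (lintegral_mono fun z => hw_mono z hβα'.le))

end MonotoneFamily

theorem measurable_lintegral_of_measurable_coe {X Y : Type*} [MeasurableSpace X]
    [MeasurableSpace Y] {κ : Y → Measure X} (hκ : ∀ B, MeasurableSet B → Measurable (κ · B))
    (hprob : ∀ y, IsProbabilityMeasure (κ y)) {f : Y → X → ℝ≥0∞}
    (hf : Measurable (Function.uncurry f)) : Measurable fun y => ∫⁻ z, f y z ∂κ y := by
  let K : ProbabilityTheory.Kernel Y X := ⟨κ, Measure.measurable_of_measurable_coe _ hκ⟩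
  have : ProbabilityTheory.IsMarkovKernel K := ⟨hprob⟩
  exact hf.lintegral_kernel_prod_right (κ := K)

theorem lowerSemicontinuousOn_eta {X A : Type*} [MeasurableSpace X] [TopologicalSpace A]
    [T2Space A] {c : X → A → ℝ≥0∞} {q : X → A → Measure X} {w : ℝ≥0 → X → ℝ≥0∞} {x : X}
    {s : Set A} (hc : ∀ r : ℝ, IsCompact {a ∈ s | c x a ≤ ENNReal.ofReal r})
    (hfin : ∀ a ∈ s, IsFiniteMeasure (q x a))
    (hcont : ∀ f : X → ℝ, Measurable f → (∃ C : ℝ, ∀ z, |f z| ≤ C) →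
      ContinuousOn (fun a => ∫ z, f z ∂q x a) s)
    (hw_meas : ∀ β, Measurable (w β)) (hw_mono : ∀ z, Monotone (w · z))
    (hw_lsc : ∀ z, LowerSemicontinuous (w · z)) :
    LowerSemicontinuousOn (fun p : ℝ≥0 × A => eta c q (w p.1) p.1 x p.2) (univ ×ˢ s) :=
  ((lowerSemicontinuousOn_of_isCompact_sep_le hc).comp continuousOn_snd fun _ hp => hp.2).add <|
    lowerSemicontinuousOn_mul_lintegral hw_meas hw_mono hw_lsc fun β =>
      lowerSemicontinuousOn_lintegral hfin hcont (hw_meas β)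

theorem measurable_domRestrict_graph_eta {X A : Type*} [MeasurableSpace X] [MeasurableSpace A]
    {Act : X → Set A} {c : X → A → ℝ≥0∞}
    (hc : Measurable ({p : X × A | p.2 ∈ Act p.1}.domRestrict fun p => c p.1 p.2))
    {q : X → A → Measure X} (hqp : ∀ x, ∀ a ∈ Act x, IsProbabilityMeasure (q x a))
    (hqm : ∀ B : Set X, MeasurableSet B →
      Measurable ({p : X × A | p.2 ∈ Act p.1}.domRestrict fun p => q p.1 p.2 B))
    {w : ℝ≥0 → X → ℝ≥0∞} (hw_meas : Measurable fun p : X × ℝ≥0 => w p.2 p.1) :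
    Measurable ({p : (X × A) × ℝ≥0 | p.1.2 ∈ Act p.1.1}.domRestrict
      fun p => eta c q (w p.2) p.2 p.1.1 p.1.2) := by
  have hgraph : Measurable fun p : {p : (X × A) × ℝ≥0 | p.1.2 ∈ Act p.1.1} =>
      (⟨p.1.1, p.2⟩ : {p : X × A | p.2 ∈ Act p.1}) :=
    (measurable_fst.comp measurable_subtype_coe).subtype_mk
  have hα : Measurable fun p : {p : (X × A) × ℝ≥0 | p.1.2 ∈ Act p.1.1} => p.1.2 :=
    measurable_snd.comp measurable_subtype_coe
  exact (hc.comp hgraph).add <| (measurable_coe_nnreal_ennreal.comp hα).mul <|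
    measurable_lintegral_of_measurable_coe (fun B hB => (hqm B hB).comp hgraph)
      (fun p => hqp _ _ p.2) (hw_meas.comp (measurable_snd.prodMk (hα.comp measurable_fst)))

theorem stmt4_general {X A : Type*}
    [MeasurableSpace X]
    [MetricSpace A] [MeasurableSpace A]
    -- the MDP: strict action map with Borel graph admitting a Borel selector,
    -- Borel one-step costs, regular transition probabilities
    (Act : X → Set A)
    (c : X → A → ℝ≥0∞)
    (hc : Measurable ({p : X × A | p.2 ∈ Act p.1}.restrict fun p => c p.1 p.2))
    (q : X → A → Measure X)
    (hqp : ∀ x, ∀ a ∈ Act x, IsProbabilityMeasure (q x a))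
    (hqm : ∀ B : Set X, MeasurableSet B →
      Measurable ({p : X × A | p.2 ∈ Act p.1}.restrict fun p => q p.1 p.2 B))
    -- Assumption S*(i): inf-compactness of the cost in the action
    (hS1 : ∀ x, ∀ r : ℝ, IsCompact {a ∈ Act x | c x a ≤ ENNReal.ofReal r})
    -- Assumption S*(ii): setwise continuity of the transition probability in the action
    (hS2 : ∀ x, ∀ f : X → ℝ, Measurable f → (∃ C : ℝ, ∀ z, |f z| ≤ C) →
      ContinuousOn (fun a => ∫ z, f z ∂(q x a)) (Act x))
    (w : ℝ≥0 → X → ℝ≥0∞)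
    (hw_meas : Measurable fun p : X × ℝ≥0 => w p.2 p.1)
    (hw_mono : ∀ x, Monotone fun α => w α x)
    (hw_lsc : ∀ x, LowerSemicontinuous fun α => w α x) :
    Measurable ({p : (X × A) × ℝ≥0 | p.1.2 ∈ Act p.1.1}.restrict
        fun p => eta c q (w p.2) p.2 p.1.1 p.1.2) ∧
    (∀ x, ∀ α : ℝ≥0, ∀ r : ℝ,
      IsCompact {a ∈ Act x | eta c q (w α) α x a ≤ ENNReal.ofReal r}) ∧
    (∀ x, ∀ a ∈ Act x, Monotone fun α => eta c q (w α) α x a) ∧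
    (∀ x, ∀ K : Set ℝ≥0, IsCompact K → ∀ r : ℝ,
      IsCompact {p : ℝ≥0 × A | p.1 ∈ K ∧ p.2 ∈ Act x ∧
        eta c q (w p.1) p.1 x p.2 ≤ ENNReal.ofReal r}) := by
  have hw_sec : ∀ β, Measurable (w β) := fun β =>
    hw_meas.comp (measurable_id.prodMk measurable_const)
  have hη_lsc : ∀ x, LowerSemicontinuousOn (fun p : ℝ≥0 × A => eta c q (w p.1) p.1 x p.2)
      (univ ×ˢ Act x) := fun x =>
    lowerSemicontinuousOn_eta (hS1 x) (fun a ha => have := hqp x a ha; inferInstance) (hS2 x)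
      hw_sec hw_mono hw_lsc
  refine ⟨measurable_domRestrict_graph_eta hc hqp hqm hw_meas, fun x α r => ?_,
    fun x a _ α₁ α₂ h => ?_, fun x K hK r => ?_⟩
  · exact LowerSemicontinuousOn.isCompact_sep_le_of_le
      ((hη_lsc x).comp (Continuous.prodMk_right α).continuousOn fun a ha => ⟨trivial, ha⟩)
      (fun a _ => le_self_add) (hS1 x r)
  · exact add_le_add le_rfl (mul_le_mul' (ENNReal.coe_le_coe.2 h)
      (lintegral_mono fun z => hw_mono z h))
  · have hc_sub : IsCompact {p ∈ K ×ˢ Act x | c x p.2 ≤ ENNReal.ofReal r} := by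
      convert hK.prod (hS1 x r) using 1
      ext p
      simp [and_assoc]
    convert ((hη_lsc x).mono (prod_mono (subset_univ K) subset_rfl)).isCompact_sep_le_of_le
      (fun p _ => le_self_add) hc_sub using 1
    ext p
    simp [and_assoc]

/-- Lemma 3.2(i,ii): Under Assumption S*, for a Borel measurable
`(x,α) ↦ w_α(x)` from `𝕏×[0,∞)` to `[0,∞]`, nondecreasing and l.s.c. in `α`:
`(x,a,α) ↦ η^α_{w_α}(x,a)` is (nonnegative and) Borel measurable on `Gr(A)×[0,∞)`;
for each `x` and `α ≥ 0`, `a ↦ η^α_{w_α}(x,a)` is inf-compact on `Act x`;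
for each `(x,a) ∈ Gr(A)`, `α ↦ η^α_{w_α}(x,a)` is nondecreasing;
and for each `x`, `(α,a) ↦ η^α_{w_α}(x,a)` is 𝕂-inf-compact on `[0,∞) × Act x`. -/
theorem stmt4 {X A : Type*}
    [MeasurableSpace X] [StandardBorelSpace X]
    [MetricSpace A] [MeasurableSpace A] [BorelSpace A] [StandardBorelSpace A]
    -- the MDP: strict action map with Borel graph admitting a Borel selector,
    -- Borel one-step costs, regular transition probabilities
    (Act : X → Set A) (hstrict : ∀ x, (Act x).Nonempty)
    (hGr : MeasurableSet {p : X × A | p.2 ∈ Act p.1})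
    (hsel : ∃ φ : X → A, Measurable φ ∧ ∀ x, φ x ∈ Act x)
    (c : X → A → ℝ≥0∞)
    (hc : Measurable ({p : X × A | p.2 ∈ Act p.1}.restrict fun p => c p.1 p.2))
    (q : X → A → Measure X)
    (hqp : ∀ x, ∀ a ∈ Act x, IsProbabilityMeasure (q x a))
    (hqm : ∀ B : Set X, MeasurableSet B →
      Measurable ({p : X × A | p.2 ∈ Act p.1}.restrict fun p => q p.1 p.2 B))
    -- Assumption S*(i): inf-compactness of the cost in the action
    (hS1 : ∀ x, ∀ r : ℝ, IsCompact {a ∈ Act x | c x a ≤ ENNReal.ofReal r})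
    -- Assumption S*(ii): setwise continuity of the transition probability in the action
    (hS2 : ∀ x, ∀ f : X → ℝ, Measurable f → (∃ C : ℝ, ∀ z, |f z| ≤ C) →
      ContinuousOn (fun a => ∫ z, f z ∂(q x a)) (Act x))
    (w : ℝ≥0 → X → ℝ≥0∞)
    (hw_meas : Measurable fun p : X × ℝ≥0 => w p.2 p.1)
    (hw_mono : ∀ x, Monotone fun α => w α x)
    (hw_lsc : ∀ x, LowerSemicontinuous fun α => w α x) :
    Measurable ({p : (X × A) × ℝ≥0 | p.1.2 ∈ Act p.1.1}.restrict
        fun p => eta c q (w p.2) p.2 p.1.1 p.1.2) ∧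
    (∀ x, ∀ α : ℝ≥0, ∀ r : ℝ,
      IsCompact {a ∈ Act x | eta c q (w α) α x a ≤ ENNReal.ofReal r}) ∧
    (∀ x, ∀ a ∈ Act x, Monotone fun α => eta c q (w α) α x a) ∧
    (∀ x, ∀ K : Set ℝ≥0, IsCompact K → ∀ r : ℝ,
      IsCompact {p : ℝ≥0 × A | p.1 ∈ K ∧ p.2 ∈ Act x ∧
        eta c q (w p.1) p.1 x p.2 ≤ ENNReal.ofReal r}) :=
  stmt4_general Act c hc q hqp hqm hS1 hS2 w hw_meas hw_mono hw_lsc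
end

section
/- Under Assumption S*, let (x,α) ↦ w_α(x) be a Borel measurable function from 𝕏×[0,+∞) to [0,+∞] such that for each x ∈ 𝕏 the function α ↦ w_α(x) is nondecreasing and lower semi-continuous, and set w*_α(x) := inf_{a∈A(x)} η^α_{w_α}(x,a). Then the sets A*_α(x) := {a ∈ A(x) : η^α_{w_α}(x,a) = w*_α(x)} are nonempty for all (x,α) ∈ 𝕏×[0,+∞) and satisfy: (a) {(x,α,a) : a ∈ A*_α(x)} is a Borel subset of 𝕏×[0,+∞)×𝔸; (b) A*_α(x) = A(x) if w*_α(x) = +∞, and A*_α(x) is compact if w*_α(x) < +∞. -/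
/-!
For fixed `(x, α)`, the map `a ↦ α ∫ w_α dq(·|x,a)` is the supremum over `n` of the maps
`a ↦ α ∫ min(w_α, n) dq(·|x,a)`, which are continuous on `A(x)` by setwise continuity; so it is
lower semicontinuous, and adding it to the inf-compact cost keeps `η` inf-compact on `A(x)`.
This gives minimisers and compactness of `A*_α(x)` when `w*_α(x) < ∞`.

For Borel measurability, `{w* ≤ r}` (with `r < ∞`) is the projection of the Borel set
`{(x, α, a) : a ∈ A(x), η ≤ r}`, whose sections are compact. Such projections are Borel
(Novikov): embed `𝔸` continuously and injectively into the compact space `ℕ → [0, ∞]`, where the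
sections become closed; the complement of the projection is then the set of `t` for which
finitely many basic open sets, each certified by a Borel envelope not to meet the section at `t`,
cover the whole space. The envelopes come from Novikov's separation theorem for countably many
analytic sets, proved like Lusin's separation theorem by refining cylinders in the Baire space.
-/

open MeasureTheory Set Filter Topology
open scoped NNReal ENNReal

open PiNat Function ProbabilityTheory

theorem exists_image_cylinder_subset {β : Type*} [TopologicalSpace β] {f : (ℕ → ℕ) → β}
    (hf : Continuous f) {x : ℕ → ℕ} {u : Set β} (hu : IsOpen u) (hx : f x ∈ u) :
    ∃ N, f '' cylinder x N ⊆ u := by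
  obtain ⟨_, ⟨y, N, rfl⟩, hxy, hsub⟩ :=
    (isTopologicalBasis_cylinders fun _ => ℕ).exists_subset_of_mem_open hx (hu.preimage hf)
  exact ⟨N, image_subset_iff.2 (mem_cylinder_iff_eq.1 hxy ▸ hsub)⟩

theorem AnalyticSet.union {α : Type*} [TopologicalSpace α] {s t : Set α} (hs : AnalyticSet s)
    (ht : AnalyticSet t) : AnalyticSet (s ∪ t) := by
  rw [union_eq_iUnion]
  exact AnalyticSet.iUnion fun b => by cases b <;> assumption

section Separation

variable {α : Type*} [MeasurableSpace α]

def MeasurablySeparated (s : ℕ → Set α) : Prop :=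
  ∃ u : ℕ → Set α, (∀ n, s n ⊆ u n) ∧ (∀ n, MeasurableSet (u n)) ∧ ⋂ n, u n = ∅

theorem MeasurablySeparated.of_subset_iUnion {s : ℕ → Set α} {t : ℕ → ℕ → Set α} (n₀ : ℕ)
    (hn₀ : s n₀ ⊆ ⋃ i, t i n₀) (hs : ∀ i, ∀ n ≠ n₀, s n ⊆ t i n)
    (ht : ∀ i, MeasurablySeparated (t i)) : MeasurablySeparated s := by
  classical
  choose u htu hu hu_empty using ht
  refine ⟨fun n => if n = n₀ then ⋃ i, u i n₀ else ⋂ i, u i n, fun n => ?_, fun n => ?_, ?_⟩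
  · dsimp only
    split_ifs with h
    · exact h ▸ hn₀.trans (iUnion_mono fun i => htu i n₀)
    · exact subset_iInter fun i => (hs i n h).trans (htu i n)
  · dsimp only
    split_ifs
    · exact .iUnion fun i => hu i n₀
    · exact .iInter fun i => hu i n
  · refine eq_empty_of_forall_notMem fun y hy => ?_
    rw [mem_iInter] at hy
    obtain ⟨i, hi⟩ := mem_iUnion.1 (by simpa using hy n₀)
    have hyi : y ∈ ⋂ n, u i n := mem_iInter.2 fun n => by
      by_cases h : n = n₀
      · exact h ▸ hi
      · simpa [h] using mem_iInter.1 (by simpa [h] using hy n) i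
    simp [hu_empty i] at hyi

theorem measurablySeparated_of_disjoint {s : ℕ → Set α} {m n : ℕ} (hmn : m ≠ n) {u v : Set α}
    (hu : MeasurableSet u) (hv : MeasurableSet v) (huv : Disjoint u v) (hsu : s m ⊆ u)
    (hsv : s n ⊆ v) : MeasurablySeparated s := by
  classical
  refine ⟨fun k => if k = m then u else if k = n then v else univ, fun k => ?_, fun k => ?_, ?_⟩
  · dsimp only
    split_ifs <;> simp_all
  · dsimp only
    split_ifs <;> simp_all
  · refine eq_empty_of_forall_notMem fun y hy => ?_
    rw [mem_iInter] at hy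
    exact huv.notMem_of_mem_left (by simpa using hy m) (by simpa [hmn.symm] using hy n)

/-- `z` codes the points `fun j => z (Nat.pair n j)`, `n : ℕ`; this is the set of points agreeing
with the `n`-th one at the positions `j` with `Nat.pair n j < k`. -/
def codedCylinder (z : ℕ → ℕ) (k n : ℕ) : Set (ℕ → ℕ) :=
  {y | ∀ j, Nat.pair n j < k → y j = z (Nat.pair n j)}

theorem codedCylinder_zero (z : ℕ → ℕ) (n : ℕ) : codedCylinder z 0 n = univ := by
  simp [codedCylinder]

theorem codedCylinder_congr {z z' : ℕ → ℕ} {k : ℕ} (h : ∀ i < k, z i = z' i) (n : ℕ) :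
    codedCylinder z k n = codedCylinder z' k n := by
  ext y
  exact forall_congr' fun j => forall_congr' fun hj => by rw [h _ hj]

theorem codedCylinder_subset_iUnion_succ (z : ℕ → ℕ) (k n : ℕ) :
    codedCylinder z k n ⊆ ⋃ i, codedCylinder (update z k i) (k + 1) n := by
  intro y hy
  refine mem_iUnion.2 ⟨y (Nat.unpair k).2, fun j hj => ?_⟩
  rcases Nat.lt_succ_iff_lt_or_eq.1 hj with hj | hj
  · rw [update_of_ne hj.ne]
    exact hy j hj
  · rw [hj, update_self, ← hj, Nat.unpair_pair]

theorem codedCylinder_subset_succ {z : ℕ → ℕ} {k n : ℕ} (hn : (Nat.unpair k).1 ≠ n) (i : ℕ) :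
    codedCylinder z k n ⊆ codedCylinder (update z k i) (k + 1) n := by
  intro y hy j hj
  have hjk : Nat.pair n j ≠ k := fun h => hn (by rw [← h, Nat.unpair_pair])
  rw [update_of_ne hjk]
  exact hy j (lt_of_le_of_ne (Nat.lt_succ_iff.1 hj) hjk)

theorem codedCylinder_subset_cylinder {z : ℕ → ℕ} {k n N : ℕ} (h : Nat.pair n N ≤ k) :
    codedCylinder z k n ⊆ cylinder (fun j => z (Nat.pair n j)) N :=
  fun _ hy j hj => hy j ((Nat.pair_lt_pair_right n hj).trans_le h)

theorem exists_not_measurablySeparated_succ (f : ℕ → (ℕ → ℕ) → α) {z : ℕ → ℕ} {k : ℕ}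
    (h : ¬ MeasurablySeparated fun n => f n '' codedCylinder z k n) :
    ∃ i, ¬ MeasurablySeparated fun n => f n '' codedCylinder (update z k i) (k + 1) n := by
  contrapose! h
  refine .of_subset_iUnion (Nat.unpair k).1 ?_ (fun i n hn => ?_) h
  · rw [← image_iUnion]
    exact image_mono (codedCylinder_subset_iUnion_succ z k _)
  · exact image_mono (codedCylinder_subset_succ (Ne.symm hn) i)

theorem exists_measurablySeparated_image_codedCylinder [TopologicalSpace α] [T2Space α]
    [OpensMeasurableSpace α] {f : ℕ → (ℕ → ℕ) → α} (hf : ∀ n, Continuous (f n))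
    (h : ⋂ n, range (f n) = ∅) (z : ℕ → ℕ) :
    ∃ k, MeasurablySeparated fun n => f n '' codedCylinder z k n := by
  by_contra! hz
  set x : ℕ → ℕ → ℕ := fun n j => z (Nat.pair n j)
  have hx : ∀ m n, f m (x m) = f n (x n) := by
    intro m n
    by_contra hne
    have hmn : m ≠ n := fun h => hne (h ▸ rfl)
    obtain ⟨u, v, hu, hv, hxu, hxv, huv⟩ := t2_separation hne
    obtain ⟨N₁, hN₁⟩ := exists_image_cylinder_subset (hf m) hu hxu
    obtain ⟨N₂, hN₂⟩ := exists_image_cylinder_subset (hf n) hv hxv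
    refine hz (max (Nat.pair m N₁) (Nat.pair n N₂)) (measurablySeparated_of_disjoint hmn
      hu.measurableSet hv.measurableSet huv ?_ ?_)
    · exact (image_mono (codedCylinder_subset_cylinder (le_max_left _ _))).trans hN₁
    · exact (image_mono (codedCylinder_subset_cylinder (le_max_right _ _))).trans hN₂
  have hmem : f 0 (x 0) ∈ ⋂ n, range (f n) := mem_iInter.2 fun n => hx 0 n ▸ mem_range_self _
  simp [h] at hmem

theorem measurablySeparated_range [TopologicalSpace α] [T2Space α] [OpensMeasurableSpace α]
    {f : ℕ → (ℕ → ℕ) → α} (hf : ∀ n, Continuous (f n)) (h : ⋂ n, range (f n) = ∅) :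
    MeasurablySeparated fun n => range (f n) := by
  /- As in Lusin's `measurablySeparable_range_of_disjoint`, refine the cylinders one digit at a
  time keeping the images non-separated; step `k` fixes digit `(Nat.unpair k).2` of the point of
  index `(Nat.unpair k).1`, so that every digit of every point is eventually fixed. -/
  by_contra hsep
  set Bad : (ℕ → ℕ) → ℕ → Prop :=
    fun z k => ¬ MeasurablySeparated fun n => f n '' codedCylinder z k n
  have hstep : ∀ z k, ∃ i, Bad z k → Bad (update z k i) (k + 1) := fun z k => by
    by_cases hz : Bad z k
    · exact (exists_not_measurablySeparated_succ f hz).imp fun _ hi _ => hi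
    · exact ⟨0, fun h => absurd h hz⟩
  choose digit hdigit using hstep
  let zs : ℕ → ℕ → ℕ := fun k => Nat.rec 0 (fun k z => update z k (digit z k)) k
  have hbad : ∀ k, Bad (zs k) k := by
    intro k
    induction k with
    | zero => simpa [Bad, codedCylinder_zero, image_univ] using hsep
    | succ k ih => exact hdigit _ _ ih
  have hstable : ∀ i k, i < k → zs k i = zs (i + 1) i := by
    intro i k hik
    induction k, hik using Nat.le_induction with
    | base => rfl
    | succ k hk ih => exact (update_of_ne (by omega) _ _).trans ih
  obtain ⟨k, hk⟩ :=
    exists_measurablySeparated_image_codedCylinder hf h fun i => zs (i + 1) i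
  refine hbad k ?_
  simpa only [codedCylinder_congr fun i hi => hstable i k hi] using hk

/-- **Novikov's separation theorem.** -/
theorem AnalyticSet.measurablySeparated [TopologicalSpace α] [T2Space α] [OpensMeasurableSpace α]
    {s : ℕ → Set α} (hs : ∀ n, AnalyticSet (s n)) (h : ⋂ n, s n = ∅) : MeasurablySeparated s := by
  by_cases he : ∃ n, s n = ∅
  · obtain ⟨n, hn⟩ := he
    exact measurablySeparated_of_disjoint n.succ_ne_self.symm .empty .univ disjoint_bot_left
      hn.le (subset_univ _)
  · simp only [not_exists] at he
    choose f hf hfs using fun n => by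
      have hsn := hs n
      rw [AnalyticSet] at hsn
      exact hsn.resolve_left (he n)
    obtain rfl : (fun n => range (f n)) = s := funext hfs
    exact measurablySeparated_range hf h

end Separation

section Projection

theorem exists_seq_isOpen_basis (H : Type*) [TopologicalSpace H] [SecondCountableTopology H] :
    ∃ V : ℕ → Set H, (∀ k, IsOpen (V k)) ∧
      ∀ a W, IsOpen W → a ∈ W → ∃ k, a ∈ V k ∧ V k ⊆ W := by
  obtain ⟨b, hbc, -, hb⟩ := TopologicalSpace.exists_countable_basis H
  obtain ⟨V, hV⟩ := (hbc.insert ∅).exists_eq_range (insert_nonempty _ _)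
  refine ⟨V, fun k => ?_, fun a W hW ha => ?_⟩
  · rcases (hV ▸ mem_range_self k : V k ∈ insert ∅ b) with h | h
    · exact h ▸ isOpen_empty
    · exact hb.isOpen h
  · obtain ⟨v, hvb, hav, hvW⟩ := hb.exists_subset_of_mem_open ha hW
    obtain ⟨k, rfl⟩ : v ∈ range V := hV ▸ mem_insert_of_mem _ hvb
    exact ⟨k, hav, hvW⟩

variable {T H : Type*} [MeasurableSpace T] [StandardBorelSpace T]
  [TopologicalSpace H] [PolishSpace H] [MeasurableSpace H] [BorelSpace H]
  {B : Set (T × H)} {V : ℕ → Set H}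

theorem exists_measurablySeparated_of_isClosed_sections (hB : MeasurableSet B)
    (hsec : ∀ t, IsClosed {a | (t, a) ∈ B}) (hVo : ∀ k, IsOpen (V k))
    (hV : ∀ a W, IsOpen W → a ∈ W → ∃ k, a ∈ V k ∧ V k ⊆ W) :
    ∃ U : ℕ → Set (T × H), (∀ n, MeasurableSet (U n)) ∧ ⋂ n, U n = ∅ ∧ Bᶜ ⊆ U 0 ∧
      ∀ k, Prod.fst ⁻¹' (Prod.fst '' (B ∩ Prod.snd ⁻¹' V k)) ∪ Prod.snd ⁻¹' (V k)ᶜ ⊆ U (k + 1) := by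
  let := upgradeStandardBorel T
  set S : ℕ → Set (T × H) := fun n => Nat.casesOn n Bᶜ
    fun k => Prod.fst ⁻¹' (Prod.fst '' (B ∩ Prod.snd ⁻¹' V k)) ∪ Prod.snd ⁻¹' (V k)ᶜ
  have hS : ∀ n, AnalyticSet (S n)
    | 0 => hB.compl.analyticSet
    | k + 1 => AnalyticSet.union
      (((hB.inter (measurable_snd (hVo k).measurableSet)).analyticSet_image measurable_fst).preimage
        continuous_fst)
      ((hVo k).isClosed_compl.preimage continuous_snd).measurableSet.analyticSet
  have hS_empty : ⋂ n, S n = ∅ := by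
    refine eq_empty_of_forall_notMem fun ⟨t, a⟩ hta => ?_
    rw [mem_iInter] at hta
    obtain ⟨k, hak, hkB⟩ := hV a _ (hsec t).isOpen_compl (hta 0)
    rcases hta (k + 1) with ⟨⟨t', a'⟩, ⟨hB', ha'⟩, rfl⟩ | hak'
    · exact hkB ha' hB'
    · exact hak' hak
  obtain ⟨U, hSU, hU, hU_empty⟩ := AnalyticSet.measurablySeparated hS hS_empty
  exact ⟨U, hU, hU_empty, hSU 0, fun k => hSU (k + 1)⟩

/-- `D k` is a measurable envelope of the analytic set `Prod.fst '' (B ∩ T × V k)`, still small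
enough to certify, for each `(t, a) ∉ B`, that some `V k ∋ a` misses the section of `B` at `t`. -/
theorem exists_measurable_envelopes_of_isClosed_sections (hB : MeasurableSet B)
    (hsec : ∀ t, IsClosed {a | (t, a) ∈ B}) (hVo : ∀ k, IsOpen (V k))
    (hV : ∀ a W, IsOpen W → a ∈ W → ∃ k, a ∈ V k ∧ V k ⊆ W) :
    ∃ D : ℕ → Set T, (∀ k, MeasurableSet (D k)) ∧
      (∀ k t a, (t, a) ∈ B → a ∈ V k → t ∈ D k) ∧
      ∀ t a, (t, a) ∉ B → ∃ k, a ∈ V k ∧ t ∉ D k := by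
  obtain ⟨U, hU, hU_empty, hBU, hPU⟩ :=
    exists_measurablySeparated_of_isClosed_sections hB hsec hVo hV
  let := upgradeStandardBorel T
  have hP : ∀ k, AnalyticSet (Prod.fst '' (B ∩ Prod.snd ⁻¹' V k)) := fun k =>
    (hB.inter (measurable_snd (hVo k).measurableSet)).analyticSet_image measurable_fst
  have hM : ∀ k, AnalyticSet (Prod.fst '' ((U (k + 1))ᶜ ∩ Prod.snd ⁻¹' V k)) := fun k =>
    ((hU _).compl.inter (measurable_snd (hVo k).measurableSet)).analyticSet_image measurable_fst
  have hPM : ∀ k, Disjoint (Prod.fst '' (B ∩ Prod.snd ⁻¹' V k))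
      (Prod.fst '' ((U (k + 1))ᶜ ∩ Prod.snd ⁻¹' V k)) := fun k => by
    refine disjoint_left.2 ?_
    rintro t ht ⟨⟨t', a⟩, ⟨haU, -⟩, rfl⟩
    exact haU (hPU k (Or.inl ht))
  choose D hPD hMD hD using fun k => (hP k).measurablySeparable (hM k) (hPM k)
  refine ⟨D, hD, fun k t a hta hak => hPD k ⟨(t, a), ⟨hta, hak⟩, rfl⟩, fun t a hta => ?_⟩
  obtain ⟨n, hn⟩ : ∃ n, (t, a) ∉ U n := by
    by_contra! hall
    simpa [hU_empty] using mem_iInter.2 hall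
  cases n with
  | zero => exact absurd (hBU hta) hn
  | succ k =>
    have hak : a ∈ V k := by_contra fun hak => hn (hPU k (Or.inr hak))
    exact ⟨k, hak, fun htD => disjoint_left.1 (hMD k) ⟨(t, a), ⟨hn, hak⟩, rfl⟩ htD⟩

theorem measurableSet_image_fst_of_isClosed_sections [CompactSpace H] (hB : MeasurableSet B)
    (hsec : ∀ t, IsClosed {a | (t, a) ∈ B}) : MeasurableSet (Prod.fst '' B) := by
  obtain ⟨V, hVo, hV⟩ := exists_seq_isOpen_basis H
  obtain ⟨D, hD, hBD, hBD'⟩ := exists_measurable_envelopes_of_isClosed_sections hB hsec hVo hV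
  have hcompl : (Prod.fst '' B)ᶜ =
      ⋃ (F : Finset ℕ) (_ : univ ⊆ ⋃ k ∈ F, V k), ⋂ k ∈ F, (D k)ᶜ := by
    ext t
    simp only [mem_compl_iff, mem_iUnion, mem_iInter, exists_prop]
    constructor
    · intro ht
      choose k hak htk using fun a => hBD' t a fun hta => ht ⟨(t, a), hta, rfl⟩
      obtain ⟨F, hF⟩ := isCompact_univ.elim_finite_subcover (fun a => V (k a))
        (fun a => hVo _) fun a _ => mem_iUnion.2 ⟨a, hak a⟩
      refine ⟨F.image k, fun a ha => ?_, fun j hj => ?_⟩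
      · obtain ⟨a', ha'F, haV⟩ := mem_iUnion₂.1 (hF ha)
        exact mem_iUnion₂.2 ⟨k a', Finset.mem_image_of_mem k ha'F, haV⟩
      · obtain ⟨a', -, rfl⟩ := Finset.mem_image.1 hj
        exact htk a'
    · rintro ⟨F, hF, htF⟩ ⟨⟨t, a⟩, hta, rfl⟩
      obtain ⟨k, hkF, hak⟩ := mem_iUnion₂.1 (hF (mem_univ a))
      exact htF k hkF (hBD k t a hta hak)
  rw [← compl_compl (Prod.fst '' B), hcompl]
  exact (MeasurableSet.iUnion fun F => .iUnion fun _ =>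
    .biInter F.countable_toSet fun k _ => (hD k).compl).compl

end Projection

section CompactSections

theorem countable_of_forall_measurableSet {α : Type*} [MeasurableSpace α] [StandardBorelSpace α]
    (h : ∀ s : Set α, MeasurableSet s) : Countable α := by
  by_contra hα
  have e := PolishSpace.measurableEquivOfNotCountable hα
    fun hℝ => Cardinal.not_countable_real (countable_univ_iff.2 hℝ)
  have hall : {s : Set ℝ | MeasurableSet s} = univ :=
    eq_univ_of_forall fun s => by simpa using e.symm.measurable (h (e ⁻¹' s))
  obtain ⟨b, hbc, hb⟩ := MeasurableSpace.CountablyGenerated.isCountablyGenerated (α := ℝ)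
  have hle : Cardinal.mk {s : Set ℝ | MeasurableSet s} ≤ Cardinal.continuum := by
    rw [hb]
    exact MeasurableSpace.cardinal_measurableSet_le_continuum
      (hbc.le_aleph0.trans Cardinal.aleph0_le_continuum)
  rw [hall, Cardinal.mk_univ, Cardinal.mk_set, Cardinal.mk_real] at hle
  exact (Cardinal.cantor _).not_ge hle

theorem exists_continuous_injective_nat_ennreal (E : Type*) [MetricSpace E]
    [TopologicalSpace.SeparableSpace E] : ∃ e : E → ℕ → ℝ≥0∞, Continuous e ∧ Injective e := by
  rcases isEmpty_or_nonempty E with _ | _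
  · exact ⟨fun _ _ => 0, continuous_const, fun a => isEmptyElim a⟩
  set z := TopologicalSpace.denseSeq E
  refine ⟨fun a k => edist a (z k), continuous_pi fun k => continuous_id.edist continuous_const,
    fun a b hab => eq_of_forall_dist_le fun δ hδ => ?_⟩
  obtain ⟨k, hk⟩ := Metric.denseRange_iff.1 (TopologicalSpace.denseRange_denseSeq E) a (δ / 2)
    (half_pos hδ)
  have hb : dist b (z k) = dist a (z k) := by
    simpa only [edist_dist, ENNReal.ofReal_eq_ofReal_iff dist_nonneg dist_nonneg] using
      (congrFun hab k).symm
  calc dist a b ≤ dist a (z k) + dist b (z k) := dist_triangle_right _ _ _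
    _ ≤ δ := by linarith

variable {A : Type*} [MetricSpace A] [MeasurableSpace A] [BorelSpace A] [StandardBorelSpace A]

theorem countable_of_pairwise_le_dist {ε : ℝ} (hε : 0 < ε) {s : Set A}
    (hs : s.Pairwise fun x y => ε ≤ dist x y) : s.Countable := by
  have := (Metric.isClosed_of_pairwise_le_dist hε hs).measurableSet.standardBorel
  refine countable_coe_iff.1 (countable_of_forall_measurableSet fun t => ?_)
  have ht : IsClosed (Subtype.val '' t) :=
    Metric.isClosed_of_pairwise_le_dist hε (hs.mono (image_subset_iff.2 fun x _ => x.2))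
  rw [← preimage_image_eq t Subtype.val_injective]
  exact measurable_subtype_coe ht.measurableSet

theorem secondCountableTopology_of_standardBorelSpace : SecondCountableTopology A := by
  refine Metric.secondCountable_of_almost_dense_set fun ε hε => ?_
  obtain ⟨N, hN⟩ := zorn_subset {s : Set A | s.Pairwise fun x y => ε ≤ dist x y}
    fun c hc hchain => ⟨⋃₀ c, (pairwise_sUnion hchain.directedOn).2 hc,
      fun _ => subset_sUnion_of_mem⟩
  refine ⟨N, countable_of_pairwise_le_dist hε hN.prop, fun x => ?_⟩
  by_contra! hx
  have hxN : x ∈ N := hN.mem_of_prop_insert <|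
    hN.prop.insert fun y hy _ => ⟨(hx y hy).le, dist_comm x y ▸ (hx y hy).le⟩
  have hxx := hx x hxN
  rw [dist_self] at hxx
  exact hε.not_gt hxx

theorem measurableSet_image_fst_of_isCompact_sections {T : Type*} [MeasurableSpace T]
    [StandardBorelSpace T] {B : Set (T × A)} (hB : MeasurableSet B)
    (hsec : ∀ t, IsCompact {a | (t, a) ∈ B}) : MeasurableSet (Prod.fst '' B) := by
  have := secondCountableTopology_of_standardBorelSpace (A := A)
  obtain ⟨e, he, he_inj⟩ := exists_continuous_injective_nat_ennreal A
  have hΦ : Measurable (Prod.map id e) := (measurable_id (α := T)).prodMap he.measurable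
  have hsec' : ∀ t, IsClosed {h | (t, h) ∈ Prod.map id e '' B} := fun t => by
    have : {h | (t, h) ∈ Prod.map id e '' B} = e '' {a | (t, a) ∈ B} := by
      ext h
      simp [Prod.map, eq_comm]
    exact this ▸ ((hsec t).image he).isClosed
  have := measurableSet_image_fst_of_isClosed_sections
    (hB.image_of_measurable_injOn hΦ (injective_id.prodMap he_inj).injOn) hsec'
  rwa [← image_comp] at this

end CompactSections

theorem setOf_eq_biInf_eq_of_biInf_eq_top {α β : Type*} [CompleteLattice β] {f : α → β}
    {s : Set α} (h : ⨅ a ∈ s, f a = ⊤) : {a ∈ s | f a = ⨅ a' ∈ s, f a'} = s := by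
  refine subset_antisymm (sep_subset _ _) fun a ha => ⟨ha, ?_⟩
  rw [h, eq_top_iff, ← h]
  exact iInf₂_le a ha

section InfCompact

variable {A : Type*} [TopologicalSpace A] {f : A → ℝ≥0∞} {s : Set A}

def IsInfCompactOn (f : A → ℝ≥0∞) (s : Set A) : Prop :=
  ∀ r : ℝ≥0∞, r ≠ ⊤ → IsCompact {a ∈ s | f a ≤ r}

theorem IsInfCompactOn.lowerSemicontinuousOn [T2Space A] (hf : IsInfCompactOn f s) :
    LowerSemicontinuousOn f s := by
  refine lowerSemicontinuousOn_iff_preimage_Iic.2 fun r => ?_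
  rcases eq_or_ne r ⊤ with rfl | hr
  · exact ⟨univ, isClosed_univ, by simp⟩
  · exact ⟨_, (hf r hr).isClosed, by ext; simp⟩

theorem IsInfCompactOn.add [T2Space A] {g : A → ℝ≥0∞} (hf : IsInfCompactOn f s)
    (hg : LowerSemicontinuousOn g s) : IsInfCompactOn (fun a => f a + g a) s := by
  intro r hr
  obtain ⟨v, hv, hsv⟩ := lowerSemicontinuousOn_iff_preimage_Iic.1
    (hf.lowerSemicontinuousOn.add hg) r
  convert (hf r hr).inter_right hv using 1
  ext a
  have := congrArg (a ∈ ·) hsv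
  simp only [mem_inter_iff, mem_preimage, mem_Iic, eq_iff_iff] at this
  simp only [mem_inter_iff]
  exact ⟨fun h => ⟨⟨h.1, le_self_add.trans h.2⟩, (this.1 h).2⟩,
    fun h => this.2 ⟨h.1.1, h.2⟩⟩

theorem IsInfCompactOn.exists_eq_biInf [T2Space A] (hf : IsInfCompactOn f s)
    (h : ⨅ a ∈ s, f a ≠ ⊤) : ∃ a ∈ s, f a = ⨅ a' ∈ s, f a' := by
  obtain ⟨r, hr, hr_top⟩ := exists_between (lt_top_iff_ne_top.2 h)
  simp only [iInf_lt_iff] at hr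
  obtain ⟨a₀, ha₀, ha₀r⟩ := hr
  have hne : {a ∈ s | f a ≤ r}.Nonempty := ⟨a₀, ha₀, ha₀r.le⟩
  obtain ⟨a, ha, hmin⟩ := (hf.lowerSemicontinuousOn.mono (sep_subset s (f · ≤ r))).exists_isMinOn
    hne (hf r hr_top.ne)
  refine ⟨a, ha.1, le_antisymm (le_iInf₂ fun a' ha' => ?_) (iInf₂_le a ha.1)⟩
  by_cases har : f a' ≤ r
  · exact hmin ⟨ha', har⟩
  · exact ha.2.trans (not_le.1 har).le

theorem IsInfCompactOn.nonempty_setOf_eq_biInf [T2Space A] (hf : IsInfCompactOn f s)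
    (hs : s.Nonempty) : {a ∈ s | f a = ⨅ a' ∈ s, f a'}.Nonempty := by
  by_cases h : ⨅ a ∈ s, f a = ⊤
  · rwa [setOf_eq_biInf_eq_of_biInf_eq_top h]
  · exact hf.exists_eq_biInf h

theorem IsInfCompactOn.isCompact_setOf_eq_biInf (hf : IsInfCompactOn f s)
    (h : ⨅ a ∈ s, f a ≠ ⊤) : IsCompact {a ∈ s | f a = ⨅ a' ∈ s, f a'} := by
  convert hf _ h using 1
  ext a
  exact and_congr_right fun ha => ⟨fun h => h.le, fun h' => le_antisymm h' (iInf₂_le a ha)⟩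

end InfCompact

section ValueFunction

variable {T A : Type*} [MeasurableSpace T] [StandardBorelSpace T]
  [MetricSpace A] [MeasurableSpace A] [BorelSpace A] [StandardBorelSpace A]
  {S : T → Set A} {F : T → A → ℝ≥0∞}

theorem measurable_biInf_of_isInfCompactOn (hS : MeasurableSet {p : T × A | p.2 ∈ S p.1})
    (hF : Measurable ({p : T × A | p.2 ∈ S p.1}.domRestrict fun p => F p.1 p.2))
    (hc : ∀ t, IsInfCompactOn (F t) (S t)) : Measurable fun t => ⨅ a ∈ S t, F t a := by
  refine measurable_of_Iic fun r => ?_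
  rcases eq_or_ne r ⊤ with rfl | hr
  · simp
  have hE : MeasurableSet {p : T × A | p.2 ∈ S p.1 ∧ F p.1 p.2 ≤ r} := by
    convert hS.subtype_image (hF (measurableSet_Iic (a := r))) using 1
    ext p
    simp [and_comm]
  convert measurableSet_image_fst_of_isCompact_sections hE fun t => hc t r hr using 1
  ext t
  constructor
  · intro ht
    obtain ⟨a, ha, heq⟩ := (hc t).exists_eq_biInf (ne_top_of_le_ne_top hr ht)
    exact ⟨(t, a), ⟨ha, heq ▸ ht⟩, rfl⟩
  · rintro ⟨⟨t, a⟩, ⟨ha, hle⟩, rfl⟩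
    exact (iInf₂_le (f := fun a _ => F t a) a ha).trans hle

theorem measurableSet_setOf_eq_biInf (hS : MeasurableSet {p : T × A | p.2 ∈ S p.1})
    (hF : Measurable ({p : T × A | p.2 ∈ S p.1}.domRestrict fun p => F p.1 p.2))
    (hc : ∀ t, IsInfCompactOn (F t) (S t)) :
    MeasurableSet {p : T × A | p.2 ∈ S p.1 ∧ F p.1 p.2 = ⨅ a ∈ S p.1, F p.1 a} := by
  have hm : Measurable fun p : {p : T × A | p.2 ∈ S p.1} => ⨅ a ∈ S p.1.1, F p.1.1 a :=
    (measurable_biInf_of_isInfCompactOn hS hF hc).comp (measurable_fst.comp measurable_subtype_coe)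
  convert hS.subtype_image (measurableSet_eq_fun hF hm) using 1
  ext p
  exact ⟨fun ⟨hp, heq⟩ => ⟨⟨p, hp⟩, heq, rfl⟩, by rintro ⟨⟨p, hp⟩, heq, rfl⟩; exact ⟨hp, heq⟩⟩

end ValueFunction

section SetwiseContinuous

variable {X A : Type*} [MeasurableSpace X] [TopologicalSpace A] {Q : A → Measure X} {s : Set A}

theorem continuousOn_lintegral_of_le_s8 (hQ : ∀ a ∈ s, IsProbabilityMeasure (Q a))
    (hQs : ∀ f : X → ℝ, Measurable f → (∃ C : ℝ, ∀ z, |f z| ≤ C) →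
      ContinuousOn (fun a => ∫ z, f z ∂Q a) s)
    {f : X → ℝ≥0∞} (hf : Measurable f) {C : ℝ≥0∞} (hC : C ≠ ⊤) (hfC : ∀ z, f z ≤ C) :
    ContinuousOn (fun a => ∫⁻ z, f z ∂Q a) s := by
  have hbdd : ∃ C' : ℝ, ∀ z, |(f z).toReal| ≤ C' :=
    ⟨C.toReal, fun z => by
      rw [abs_of_nonneg ENNReal.toReal_nonneg]
      exact ENNReal.toReal_mono hC (hfC z)⟩
  refine (ENNReal.continuous_ofReal.comp_continuousOn (hQs _ hf.ennreal_toReal hbdd)).congr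
    fun a ha => ?_
  have := hQ a ha
  have hfin : ∫⁻ z, f z ∂Q a ≠ ⊤ :=
    ne_top_of_le_ne_top (by simpa using hC) ((lintegral_mono hfC).trans_eq (lintegral_const C))
  rw [comp_apply, integral_toReal hf.aemeasurable
    (ae_of_all _ fun z => (hfC z).trans_lt hC.lt_top), ENNReal.ofReal_toReal hfin]

theorem lowerSemicontinuousOn_lintegral_s8 (hQ : ∀ a ∈ s, IsProbabilityMeasure (Q a))
    (hQs : ∀ f : X → ℝ, Measurable f → (∃ C : ℝ, ∀ z, |f z| ≤ C) →
      ContinuousOn (fun a => ∫ z, f z ∂Q a) s)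
    {f : X → ℝ≥0∞} (hf : Measurable f) : LowerSemicontinuousOn (fun a => ∫⁻ z, f z ∂Q a) s := by
  have htrunc : ∀ a, ∫⁻ z, f z ∂Q a = ⨆ n : ℕ, ∫⁻ z, min (f z) n ∂Q a := fun a => by
    rw [← lintegral_iSup (fun n => hf.min measurable_const)
      fun m n hmn z => min_le_min_left _ (by exact_mod_cast hmn)]
    congr with z
    change f z = ⨆ n : ℕ, f z ⊓ (n : ℝ≥0∞)
    rw [← inf_iSup_eq, ENNReal.iSup_natCast, inf_top_eq]
  simp_rw [htrunc]
  exact lowerSemicontinuousOn_iSup fun n => (continuousOn_lintegral_of_le_s8 hQ hQs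
    (hf.min measurable_const) (ENNReal.natCast_ne_top n) fun z => min_le_right _ _)
    |>.lowerSemicontinuousOn

end SetwiseContinuous

theorem measurable_domRestrict_lintegral {T X : Type*} [MeasurableSpace T] [MeasurableSpace X]
    {G : Set T} {Q : T → Measure X} (hQ : Measurable (G.domRestrict Q))
    (hQp : ∀ t ∈ G, IsProbabilityMeasure (Q t)) {f : T → X → ℝ≥0∞} (hf : Measurable (uncurry f)) :
    Measurable (G.domRestrict fun t => ∫⁻ z, f t z ∂Q t) := by
  let κ : Kernel G X := ⟨G.domRestrict Q, hQ⟩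
  have : IsMarkovKernel κ := ⟨fun t => hQp t t.2⟩
  exact (hf.comp (measurable_subtype_coe.prodMap measurable_id)).lintegral_kernel_prod_right'
    (κ := κ)

theorem isInfCompactOn_eta {X A : Type*} [MeasurableSpace X] [TopologicalSpace A] [T2Space A]
    {c : X → A → ℝ≥0∞} {q : X → A → Measure X} {x : X} {s : Set A} (hc : IsInfCompactOn (c x) s)
    (hq : ∀ a ∈ s, IsProbabilityMeasure (q x a))
    (hqs : ∀ f : X → ℝ, Measurable f → (∃ C : ℝ, ∀ z, |f z| ≤ C) →
      ContinuousOn (fun a => ∫ z, f z ∂q x a) s)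
    {w : X → ℝ≥0∞} (hw : Measurable w) (α : ℝ≥0) : IsInfCompactOn (eta c q w α x) s := by
  have hint : LowerSemicontinuousOn (fun a => (α : ℝ≥0∞) * ∫⁻ z, w z ∂q x a) s := by
    simpa only [lintegral_const_mul _ hw] using
      lowerSemicontinuousOn_lintegral_s8 hq hqs (hw.const_mul (α : ℝ≥0∞))
  exact hc.add hint

theorem measurable_domRestrict_eta {X A : Type*} [MeasurableSpace X] [MeasurableSpace A]
    {Act : X → Set A} {c : X → A → ℝ≥0∞} {q : X → A → Measure X}
    (hc : Measurable ({p : X × A | p.2 ∈ Act p.1}.domRestrict fun p => c p.1 p.2))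
    (hqp : ∀ x, ∀ a ∈ Act x, IsProbabilityMeasure (q x a))
    (hqm : ∀ B : Set X, MeasurableSet B →
      Measurable ({p : X × A | p.2 ∈ Act p.1}.domRestrict fun p => q p.1 p.2 B))
    {w : ℝ≥0 → X → ℝ≥0∞} (hw : Measurable fun p : X × ℝ≥0 => w p.2 p.1) :
    Measurable ({p : (X × ℝ≥0) × A | p.2 ∈ Act p.1.1}.domRestrict
      fun p => eta c q (w p.1.2) p.1.2 p.1.1 p.2) := by
  have hproj : Measurable fun p : {p : (X × ℝ≥0) × A | p.2 ∈ Act p.1.1} =>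
      (⟨(p.1.1.1, p.1.2), p.2⟩ : {p : X × A | p.2 ∈ Act p.1}) :=
    ((measurable_fst.fst.prodMk measurable_snd).comp measurable_subtype_coe).subtype_mk
  have hQ : Measurable ({p : (X × ℝ≥0) × A | p.2 ∈ Act p.1.1}.domRestrict
      fun p => q p.1.1 p.2) :=
    Measure.measurable_of_measurable_coe _ fun B hB => (hqm B hB).comp hproj
  have hint := measurable_domRestrict_lintegral hQ (fun p hp => hqp _ _ hp)
    (f := fun p z => w p.1.2 z) (hw.comp (measurable_snd.prodMk measurable_fst.fst.snd))
  exact (hc.comp hproj).add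
    ((measurable_coe_nnreal_ennreal.comp (measurable_fst.snd.comp measurable_subtype_coe)).mul hint)

theorem stmt8_general {X A : Type*}
    [MeasurableSpace X] [StandardBorelSpace X]
    [MetricSpace A] [MeasurableSpace A] [BorelSpace A] [StandardBorelSpace A]
    -- the MDP: strict action map with Borel graph admitting a Borel selector,
    -- Borel one-step costs, regular transition probabilities
    (Act : X → Set A) (hstrict : ∀ x, (Act x).Nonempty)
    (hGr : MeasurableSet {p : X × A | p.2 ∈ Act p.1})
    (c : X → A → ℝ≥0∞)
    (hc : Measurable ({p : X × A | p.2 ∈ Act p.1}.restrict fun p => c p.1 p.2))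
    (q : X → A → Measure X)
    (hqp : ∀ x, ∀ a ∈ Act x, IsProbabilityMeasure (q x a))
    (hqm : ∀ B : Set X, MeasurableSet B →
      Measurable ({p : X × A | p.2 ∈ Act p.1}.restrict fun p => q p.1 p.2 B))
    -- Assumption S*(i): inf-compactness of the cost in the action
    (hS1 : ∀ x, ∀ r : ℝ, IsCompact {a ∈ Act x | c x a ≤ ENNReal.ofReal r})
    -- Assumption S*(ii): setwise continuity of the transition probability in the action
    (hS2 : ∀ x, ∀ f : X → ℝ, Measurable f → (∃ C : ℝ, ∀ z, |f z| ≤ C) →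
      ContinuousOn (fun a => ∫ z, f z ∂(q x a)) (Act x))
    (w : ℝ≥0 → X → ℝ≥0∞)
    (hw_meas : Measurable fun p : X × ℝ≥0 => w p.2 p.1) :
    (∀ x, ∀ α : ℝ≥0,
      {a ∈ Act x | eta c q (w α) α x a = ⨅ a' ∈ Act x, eta c q (w α) α x a'}.Nonempty) ∧
    MeasurableSet {p : X × ℝ≥0 × A | p.2.2 ∈ Act p.1 ∧
      eta c q (w p.2.1) p.2.1 p.1 p.2.2 = ⨅ a' ∈ Act p.1, eta c q (w p.2.1) p.2.1 p.1 a'} ∧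
    (∀ x, ∀ α : ℝ≥0, (⨅ a' ∈ Act x, eta c q (w α) α x a') = ⊤ →
      {a ∈ Act x | eta c q (w α) α x a = ⨅ a' ∈ Act x, eta c q (w α) α x a'} = Act x) ∧
    (∀ x, ∀ α : ℝ≥0, (⨅ a' ∈ Act x, eta c q (w α) α x a') < ⊤ →
      IsCompact {a ∈ Act x | eta c q (w α) α x a = ⨅ a' ∈ Act x, eta c q (w α) α x a'}) := by
  have hinf : ∀ x (α : ℝ≥0), IsInfCompactOn (eta c q (w α) α x) (Act x) := fun x α =>
    isInfCompactOn_eta (fun r hr => by simpa only [ENNReal.ofReal_toReal hr] using hS1 x r.toReal)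
      (hqp x) (hS2 x) (hw_meas.comp (measurable_id.prodMk measurable_const)) α
  refine ⟨fun x α => (hinf x α).nonempty_setOf_eq_biInf (hstrict x), ?_,
    fun x α => setOf_eq_biInf_eq_of_biInf_eq_top,
    fun x α h => (hinf x α).isCompact_setOf_eq_biInf h.ne⟩
  have hargmin := measurableSet_setOf_eq_biInf (S := fun t : X × ℝ≥0 => Act t.1)
    (F := fun t => eta c q (w t.2) t.2 t.1) ((measurable_fst.fst.prodMk measurable_snd) hGr)
    (measurable_domRestrict_eta hc hqp hqm hw_meas) fun t => hinf t.1 t.2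
  exact MeasurableEquiv.prodAssoc.symm.measurable hargmin

/-- Lemma 3.2(vi): Under Assumption S*, for a Borel measurable
`(x,α) ↦ w_α(x)` from `𝕏×[0,∞)` to `[0,∞]`, nondecreasing and l.s.c. in `α`, the sets
`A*_α(x) := {a ∈ Act x : η^α_{w_α}(x,a) = w*_α(x)}` are nonempty; their graph
`{(x,α,a) : a ∈ A*_α(x)}` is Borel in `𝕏×[0,∞)×𝔸`; `A*_α(x) = Act x` if
`w*_α(x) = +∞`; and `A*_α(x)` is compact if `w*_α(x) < +∞`. -/
theorem stmt8 {X A : Type*}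
    [MeasurableSpace X] [StandardBorelSpace X]
    [MetricSpace A] [MeasurableSpace A] [BorelSpace A] [StandardBorelSpace A]
    -- the MDP: strict action map with Borel graph admitting a Borel selector,
    -- Borel one-step costs, regular transition probabilities
    (Act : X → Set A) (hstrict : ∀ x, (Act x).Nonempty)
    (hGr : MeasurableSet {p : X × A | p.2 ∈ Act p.1})
    (hsel : ∃ φ : X → A, Measurable φ ∧ ∀ x, φ x ∈ Act x)
    (c : X → A → ℝ≥0∞)
    (hc : Measurable ({p : X × A | p.2 ∈ Act p.1}.restrict fun p => c p.1 p.2))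
    (q : X → A → Measure X)
    (hqp : ∀ x, ∀ a ∈ Act x, IsProbabilityMeasure (q x a))
    (hqm : ∀ B : Set X, MeasurableSet B →
      Measurable ({p : X × A | p.2 ∈ Act p.1}.restrict fun p => q p.1 p.2 B))
    -- Assumption S*(i): inf-compactness of the cost in the action
    (hS1 : ∀ x, ∀ r : ℝ, IsCompact {a ∈ Act x | c x a ≤ ENNReal.ofReal r})
    -- Assumption S*(ii): setwise continuity of the transition probability in the action
    (hS2 : ∀ x, ∀ f : X → ℝ, Measurable f → (∃ C : ℝ, ∀ z, |f z| ≤ C) →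
      ContinuousOn (fun a => ∫ z, f z ∂(q x a)) (Act x))
    (w : ℝ≥0 → X → ℝ≥0∞)
    (hw_meas : Measurable fun p : X × ℝ≥0 => w p.2 p.1)
    (hw_mono : ∀ x, Monotone fun α => w α x)
    (hw_lsc : ∀ x, LowerSemicontinuous fun α => w α x) :
    (∀ x, ∀ α : ℝ≥0,
      {a ∈ Act x | eta c q (w α) α x a = ⨅ a' ∈ Act x, eta c q (w α) α x a'}.Nonempty) ∧
    MeasurableSet {p : X × ℝ≥0 × A | p.2.2 ∈ Act p.1 ∧
      eta c q (w p.2.1) p.2.1 p.1 p.2.2 = ⨅ a' ∈ Act p.1, eta c q (w p.2.1) p.2.1 p.1 a'} ∧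
    (∀ x, ∀ α : ℝ≥0, (⨅ a' ∈ Act x, eta c q (w α) α x a') = ⊤ →
      {a ∈ Act x | eta c q (w α) α x a = ⨅ a' ∈ Act x, eta c q (w α) α x a'} = Act x) ∧
    (∀ x, ∀ α : ℝ≥0, (⨅ a' ∈ Act x, eta c q (w α) α x a') < ⊤ →
      IsCompact {a ∈ Act x | eta c q (w α) α x a = ⨅ a' ∈ Act x, eta c q (w α) α x a'}) :=
  stmt8_general Act hstrict hGr c hc q hqp hqm hS1 hS2 w hw_meas
end

section
/- For every β ∈ (0,1) and M > 0: g_{β,M}(α) ≤ 1 for each α ∈ (0,β] ∪ [δ_{β,M},1), and g_{β,M}(γ_{β,M}) ≥ M. -/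
/-!
The choice `γ ≥ 1 − ε/(3M)` makes `M(1 − γ) ≤ ε/3`, and the choice of `n*` makes
`γ^{n*} ≤ M(1 − γ)/ε ≤ 1/3`, so `ε(1 − γ^{n*})² ≥ 4ε/9 ≥ M(1 − γ)`.
For small `α ≤ β` one simply has `ε(1 − α^n)² ≤ ε ≤ 1 − α`. For `α` near `1`, Bernoulli's
inequality gives `1 − α^n ≤ n(1 − α)`, while `α ≥ δ` forces `ε n (1 − α^n) ≤ 1`; multiplying,
`ε(1 − α^n)² ≤ 1 − α`.
-/

open Filter Topology

/-- `ε_β := 1 − β`. -/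
noncomputable def epsP (β : ℝ) : ℝ := 1 - β

/-- `γ_{β,M} := max{(β+1)/2, 1 − ε_β/(3M)}`. -/
noncomputable def gammaP (β M : ℝ) : ℝ := max ((β + 1) / 2) (1 - epsP β / (3 * M))

/-- `n*_{β,M} := ⌊log_{γ_{β,M}}(min{1/2, M(1−γ_{β,M})/ε_β})⌋ + 1`. -/
noncomputable def nStar (β M : ℝ) : ℕ :=
  (⌊Real.logb (gammaP β M) (min (1 / 2) (M * (1 - gammaP β M) / epsP β))⌋).toNat + 1

/-- `δ_{β,M} := max{(γ_{β,M}+1)/2, (1 − 1/(ε_β n*_{β,M}))^(1/n*_{β,M})}`. -/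
noncomputable def deltaP (β M : ℝ) : ℝ :=
  max ((gammaP β M + 1) / 2)
    ((1 - 1 / (epsP β * (nStar β M : ℝ))) ^ ((1 : ℝ) / (nStar β M : ℝ)))

/-- `g_{β,M}(α) := ε_β (1 − α^{n*_{β,M}})² / (1 − α)`. -/
noncomputable def gFun (β M α : ℝ) : ℝ := epsP β * (1 - α ^ nStar β M) ^ 2 / (1 - α)

lemma pow_toNat_floor_logb_add_one_le {b x : ℝ} (hb₀ : 0 < b) (hb₁ : b < 1) (hx : 0 < x) :
    b ^ ((⌊Real.logb b x⌋).toNat + 1) ≤ x := by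
  rw [← Real.rpow_natCast, ← Real.logb_le_iff_le_rpow_of_base_lt_one hb₀ hb₁ hx]
  have h₁ := Int.lt_floor_add_one (Real.logb b x)
  have h₂ : (⌊Real.logb b x⌋ : ℝ) ≤ ((⌊Real.logb b x⌋.toNat : ℕ) : ℝ) := by
    exact_mod_cast Int.self_le_toNat _
  push_cast
  linarith

section OneSubPow

variable {ε α : ℝ} {n : ℕ}

lemma mul_sq_one_sub_pow_le_of_mul_le_one (hε : 0 ≤ ε) (hα₀ : 0 ≤ α) (hα₁ : α ≤ 1)
    (h : ε * n * (1 - α ^ n) ≤ 1) : ε * (1 - α ^ n) ^ 2 ≤ 1 - α := by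
  have hpow : 0 ≤ 1 - α ^ n := sub_nonneg.mpr (pow_le_one₀ hα₀ hα₁)
  have bernoulli : 1 - α ^ n ≤ n * (1 - α) := by
    linarith [one_add_mul_sub_le_pow (by linarith : -1 ≤ α) n]
  calc ε * (1 - α ^ n) ^ 2 = ε * (1 - α ^ n) * (1 - α ^ n) := by ring
    _ ≤ ε * (1 - α ^ n) * (n * (1 - α)) := by gcongr
    _ = ε * n * (1 - α ^ n) * (1 - α) := by ring
    _ ≤ 1 * (1 - α) := by gcongr
    _ = 1 - α := one_mul _

lemma mul_one_sub_pow_le_one_of_rpow_le (hn : n ≠ 0) (hε : 0 ≤ ε) (hα : 0 ≤ α)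
    (h : (1 - 1 / (ε * n)) ^ ((1 : ℝ) / n) ≤ α) : ε * n * (1 - α ^ n) ≤ 1 := by
  have hεn : 0 ≤ ε * n := by positivity
  rcases le_or_gt (ε * n) 1 with hle | hgt
  · nlinarith [pow_nonneg hα n]
  · have hb : 0 ≤ 1 - 1 / (ε * n) := by
      rw [sub_nonneg, div_le_one (by linarith)]; exact hgt.le
    have hαn : 1 - 1 / (ε * n) ≤ α ^ n := by
      calc 1 - 1 / (ε * n) = ((1 - 1 / (ε * n)) ^ ((1 : ℝ) / n)) ^ n := by
            rw [one_div (n : ℝ), Real.rpow_inv_natCast_pow hb hn]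
        _ ≤ α ^ n := by gcongr
    calc ε * n * (1 - α ^ n) ≤ ε * n * (1 / (ε * n)) := by gcongr; linarith
      _ = 1 := mul_one_div_cancel (by positivity)

end OneSubPow

section Parameters

variable {β M : ℝ}

lemma lt_gammaP (hβ : β < 1) : β < gammaP β M :=
  lt_of_lt_of_le (by linarith) (le_max_left _ _)

lemma gammaP_pos (hβ : β ∈ Set.Ioo 0 1) : 0 < gammaP β M :=
  hβ.1.trans (lt_gammaP hβ.2)

lemma gammaP_lt_one (hβ : β < 1) (hM : 0 < M) : gammaP β M < 1 := by
  have : 0 < epsP β / (3 * M) := div_pos (by rw [epsP]; linarith) (by positivity)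
  exact max_lt (by linarith) (by linarith)

lemma mul_one_sub_gammaP_le (hM : 0 < M) : 3 * M * (1 - gammaP β M) ≤ epsP β := by
  have h : 1 - epsP β / (3 * M) ≤ gammaP β M := le_max_right _ _
  have h' : 1 - gammaP β M ≤ epsP β / (3 * M) := by linarith
  rwa [le_div_iff₀ (by positivity), mul_comm] at h'

lemma gammaP_pow_nStar_le (hβ : β ∈ Set.Ioo 0 1) (hM : 0 < M) :
    gammaP β M ^ nStar β M ≤ M * (1 - gammaP β M) / epsP β := by
  have hγ₁ := gammaP_lt_one hβ.2 hM
  have hε : 0 < epsP β := by rw [epsP]; linarith [hβ.2]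
  refine (pow_toNat_floor_logb_add_one_le (gammaP_pos hβ) hγ₁ ?_).trans
    (min_le_right _ _)
  exact lt_min (by norm_num) (div_pos (mul_pos hM (by linarith)) hε)

lemma gFun_le_one_of_le (hβ : β < 1) {α : ℝ} (hα₀ : 0 ≤ α) (hαβ : α ≤ β) :
    gFun β M α ≤ 1 := by
  have hα₁ : α < 1 := hαβ.trans_lt hβ
  have hpow : (1 - α ^ nStar β M) ^ 2 ≤ 1 := by
    have := pow_le_one₀ hα₀ hα₁.le (n := nStar β M)
    nlinarith [pow_nonneg hα₀ (nStar β M)]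
  rw [gFun, div_le_one (by linarith)]
  calc epsP β * (1 - α ^ nStar β M) ^ 2 ≤ epsP β * 1 := by
        gcongr; rw [epsP]; linarith
    _ ≤ 1 - α := by rw [epsP]; linarith

lemma gFun_le_one_of_deltaP_le (hβ : β ∈ Set.Ioo 0 1) {α : ℝ} (hδα : deltaP β M ≤ α)
    (hα₁ : α < 1) : gFun β M α ≤ 1 := by
  have hε : 0 ≤ epsP β := by rw [epsP]; linarith [hβ.2]
  have hα₀ : 0 ≤ α := by
    linarith [gammaP_pos (M := M) hβ, (le_max_left _ _).trans hδα]
  rw [gFun, div_le_one (by linarith)]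
  exact mul_sq_one_sub_pow_le_of_mul_le_one hε hα₀ hα₁.le
    (mul_one_sub_pow_le_one_of_rpow_le (Nat.succ_ne_zero _) hε hα₀
      ((le_max_right _ _).trans hδα))

lemma le_gFun_gammaP (hβ : β ∈ Set.Ioo 0 1) (hM : 0 < M) : M ≤ gFun β M (gammaP β M) := by
  have hγ₁ := gammaP_lt_one hβ.2 hM
  have hε : 0 < epsP β := by rw [epsP]; linarith [hβ.2]
  have hpow := gammaP_pow_nStar_le hβ hM
  have hthird : M * (1 - gammaP β M) / epsP β ≤ 1 / 3 := by
    rw [div_le_iff₀ hε]; linarith [mul_one_sub_gammaP_le (β := β) hM]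
  have hsq : 1 / 3 ≤ (1 - gammaP β M ^ nStar β M) ^ 2 := by
    nlinarith [pow_nonneg (gammaP_pos (M := M) hβ).le (nStar β M)]
  rw [gFun, le_div_iff₀ (by linarith)]
  calc M * (1 - gammaP β M) ≤ epsP β * (1 / 3) := by
        linarith [mul_one_sub_gammaP_le (β := β) hM]
    _ ≤ epsP β * (1 - gammaP β M ^ nStar β M) ^ 2 := by gcongr

end Parameters

/-- Lemma 4.3: for every `β ∈ (0,1)` and `M > 0`, `g_{β,M}(α) ≤ 1` for
each `α ∈ (0,β] ∪ [δ_{β,M},1)`, and `g_{β,M}(γ_{β,M}) ≥ M`. -/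
theorem stmt16 (β M : ℝ) (hβ : β ∈ Set.Ioo (0 : ℝ) 1) (hM : 0 < M) :
    (∀ α, α ∈ Set.Ioc (0 : ℝ) β ∪ Set.Ico (deltaP β M) 1 → gFun β M α ≤ 1) ∧
    M ≤ gFun β M (gammaP β M) := by
  refine ⟨?_, le_gFun_gammaP hβ hM⟩
  rintro α (⟨hα₀, hαβ⟩ | ⟨hδα, hα₁⟩)
  · exact gFun_le_one_of_le hβ.2 hα₀.le hαβ
  · exact gFun_le_one_of_deltaP_le hβ hδα hα₁
end
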